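/- arXiv:1204.3213 — 4 statements merged into one kernel-verified Lean document; each statement's English description precedes it below -/
import Mathlib

section
/- Let μ and ν be probability measures on a real Hilbert space H, let π be a probability measure on H × H whose first marginal is μ and whose second marginal is ν, and let α ∈ H be such that ∫ ‖y − α‖^{−2} dμ(y) < ∞ and ∫ ‖y − α‖^{−2} dν(y) < ∞. Then ‖∫ D(α,y) dμ(y) − ∫ D(α,y') dν(y')‖ ≤ ( √(∫ ‖y − α‖^{−2} dμ(y)) + √(∫ ‖y' − α‖^{−2} dν(y')) ) · √(∫ ‖y − y'‖² dπ(y,y')). -/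
open MeasureTheory
open scoped Classical ENNReal

/-- The unit vector "starting" from `a` in the direction of `b`. -/
noncomputable def unitDir {H : Type*} [NormedAddCommGroup H] [InnerProductSpace ℝ H]
    (a b : H) : H :=
  if b = a then 0 else ‖b - a‖⁻¹ • (b - a)

/-! Through the coupling, the difference of the two means is `∫ (D(α,y) − D(α,y')) dπ`.
The normalization `u ↦ u / ‖u‖` satisfies `‖u/‖u‖ − v/‖v‖‖ ≤ 2‖u − v‖ / max ‖u‖ ‖v‖
≤ (‖u‖⁻¹ + ‖v‖⁻¹) ‖u − v‖`, and Cauchy–Schwarz followed by Minkowski in `L²(π)` turn the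
integral of the right-hand side into the stated bound. -/

section Normalize

variable {E : Type*} [NormedAddCommGroup E] [NormedSpace ℝ E]

theorem norm_inv_norm_smul_sub_inv_norm_smul_le_two_mul {u : E} (hu : u ≠ 0) (v : E) :
    ‖‖u‖⁻¹ • u - ‖v‖⁻¹ • v‖ ≤ 2 * ‖u‖⁻¹ * ‖u - v‖ := by
  have hu' : 0 < ‖u‖ := norm_pos_iff.mpr hu
  have hsplit : ‖u‖⁻¹ • u - ‖v‖⁻¹ • v = ‖u‖⁻¹ • (u - v) + (‖u‖⁻¹ - ‖v‖⁻¹) • v := by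
    rw [smul_sub, sub_smul]; abel
  have hscale : ‖(‖u‖⁻¹ - ‖v‖⁻¹) • v‖ ≤ ‖u‖⁻¹ * ‖u - v‖ := by
    rcases eq_or_ne v 0 with rfl | hv
    · simp only [smul_zero, norm_zero, sub_zero]; positivity
    have hv' : 0 < ‖v‖ := norm_pos_iff.mpr hv
    calc ‖(‖u‖⁻¹ - ‖v‖⁻¹) • v‖ = ‖u‖⁻¹ * |‖v‖ - ‖u‖| := by
          rw [norm_smul, Real.norm_eq_abs, inv_sub_inv hu'.ne' hv'.ne', abs_div,
            abs_of_pos (mul_pos hu' hv')]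
          field_simp
      _ ≤ ‖u‖⁻¹ * ‖u - v‖ := by
          gcongr
          rw [abs_sub_comm]
          exact abs_norm_sub_norm_le u v
  calc ‖‖u‖⁻¹ • u - ‖v‖⁻¹ • v‖
      ≤ ‖‖u‖⁻¹ • (u - v)‖ + ‖(‖u‖⁻¹ - ‖v‖⁻¹) • v‖ := hsplit ▸ norm_add_le _ _
    _ ≤ ‖u‖⁻¹ * ‖u - v‖ + ‖u‖⁻¹ * ‖u - v‖ := by
        rw [norm_smul, norm_inv, norm_norm]; gcongr
    _ = 2 * ‖u‖⁻¹ * ‖u - v‖ := by ring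

/-- With the junk value `‖0‖⁻¹ = 0`, both sides equal `1` when exactly one of `u, v` is `0`. -/
theorem norm_inv_norm_smul_sub_inv_norm_smul_le (u v : E) :
    ‖‖u‖⁻¹ • u - ‖v‖⁻¹ • v‖ ≤ (‖u‖⁻¹ + ‖v‖⁻¹) * ‖u - v‖ := by
  rcases eq_or_ne u 0 with rfl | hu
  · simp [norm_smul]
  rcases eq_or_ne v 0 with rfl | hv
  · simp [norm_smul]
  have huv := norm_inv_norm_smul_sub_inv_norm_smul_le_two_mul hu v
  have hvu := norm_inv_norm_smul_sub_inv_norm_smul_le_two_mul hv u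
  rw [norm_sub_rev, norm_sub_rev v] at hvu
  rcases le_total ‖u‖⁻¹ ‖v‖⁻¹ with h | h
  · nlinarith [norm_nonneg (u - v)]
  · nlinarith [norm_nonneg (u - v)]

end Normalize

theorem ofReal_norm_integral_map_fst_sub_integral_map_snd_le {X Y E : Type*} [MeasurableSpace X]
    [MeasurableSpace Y] [NormedAddCommGroup E] [NormedSpace ℝ E] (π : Measure (X × Y))
    {f : X → E} {g : Y → E} (hf : Integrable f (π.map Prod.fst))
    (hg : Integrable g (π.map Prod.snd)) :
    ENNReal.ofReal ‖∫ x, f x ∂π.map Prod.fst - ∫ y, g y ∂π.map Prod.snd‖ ≤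
      ∫⁻ z, ENNReal.ofReal ‖f z.1 - g z.2‖ ∂π := by
  rw [integral_map measurable_fst.aemeasurable hf.1, integral_map measurable_snd.aemeasurable hg.1,
    ← integral_sub (f := fun z : X × Y ↦ f z.1) (g := fun z : X × Y ↦ g z.2)
      (hf.comp_measurable measurable_fst) (hg.comp_measurable measurable_snd)]
  simp only [ofReal_norm]
  exact enorm_integral_le_lintegral_enorm _

theorem ENNReal.lintegral_add_mul_le_L2_add_L2_mul_L2 {X : Type*} [MeasurableSpace X]
    {μ : Measure X} {f g h : X → ℝ≥0∞} (hf : AEMeasurable f μ) (hg : AEMeasurable g μ)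
    (hh : AEMeasurable h μ) :
    ∫⁻ x, (f x + g x) * h x ∂μ ≤
      ((∫⁻ x, f x ^ 2 ∂μ) ^ (1 / 2 : ℝ) + (∫⁻ x, g x ^ 2 ∂μ) ^ (1 / 2 : ℝ)) *
        (∫⁻ x, h x ^ 2 ∂μ) ^ (1 / 2 : ℝ) := by
  simp only [← ENNReal.rpow_two]
  calc ∫⁻ x, ((f + g) * h) x ∂μ
      ≤ (∫⁻ x, (f + g) x ^ (2 : ℝ) ∂μ) ^ (1 / 2 : ℝ) * (∫⁻ x, h x ^ (2 : ℝ) ∂μ) ^ (1 / 2 : ℝ) :=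
        ENNReal.lintegral_mul_le_Lp_mul_Lq μ .two_two (hf.add hg) hh
    _ ≤ _ := by
        gcongr
        exact ENNReal.lintegral_Lp_add_le hf hg one_le_two

section UnitDir

variable {H : Type*} [NormedAddCommGroup H] [InnerProductSpace ℝ H]

theorem unitDir_eq (a b : H) : unitDir a b = ‖b - a‖⁻¹ • (b - a) := by
  unfold unitDir
  split_ifs with h <;> simp [h]

theorem norm_unitDir_le_one (a b : H) : ‖unitDir a b‖ ≤ 1 := by
  rw [unitDir_eq, norm_smul, norm_inv, norm_norm]
  exact inv_mul_le_one_of_le₀ le_rfl (norm_nonneg _)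

theorem measurable_unitDir [MeasurableSpace H] [BorelSpace H] [SecondCountableTopology H]
    (a : H) : Measurable (unitDir a) := by
  simp only [funext (unitDir_eq a)]
  fun_prop

theorem integrable_unitDir [MeasurableSpace H] [BorelSpace H] [SecondCountableTopology H]
    (a : H) (μ : Measure H) [IsFiniteMeasure μ] : Integrable (unitDir a) μ :=
  .of_bound (measurable_unitDir a).aestronglyMeasurable 1
    (.of_forall (norm_unitDir_le_one a))

theorem ofReal_norm_unitDir_sub_unitDir_le (a y y' : H) :
    ENNReal.ofReal ‖unitDir a y - unitDir a y'‖ ≤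
      ((ENNReal.ofReal ‖y - a‖)⁻¹ + (ENNReal.ofReal ‖y' - a‖)⁻¹) * ENNReal.ofReal ‖y - y'‖ := by
  have h := norm_inv_norm_smul_sub_inv_norm_smul_le (y - a) (y' - a)
  rw [sub_sub_sub_cancel_right, ← unitDir_eq, ← unitDir_eq] at h
  calc ENNReal.ofReal ‖unitDir a y - unitDir a y'‖
      ≤ ENNReal.ofReal ((‖y - a‖⁻¹ + ‖y' - a‖⁻¹) * ‖y - y'‖) := ENNReal.ofReal_le_ofReal h
    _ = (ENNReal.ofReal ‖y - a‖⁻¹ + ENNReal.ofReal ‖y' - a‖⁻¹) * ENNReal.ofReal ‖y - y'‖ := by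
        rw [ENNReal.ofReal_mul (by positivity), ENNReal.ofReal_add (by positivity) (by positivity)]
    _ ≤ _ := by gcongr <;> exact ENNReal.ofReal_inv_le

end UnitDir

theorem norm_integral_unitDir_sub_le_general
    {H : Type*} [NormedAddCommGroup H] [InnerProductSpace ℝ H]
    [MeasurableSpace H] [BorelSpace H] [SecondCountableTopology H]
    (μ ν : Measure H)
    (π : Measure (H × H)) [IsProbabilityMeasure π]
    (hπ1 : π.map Prod.fst = μ) (hπ2 : π.map Prod.snd = ν)
    (α : H) :
    ENNReal.ofReal ‖(∫ y, unitDir α y ∂μ) - ∫ y', unitDir α y' ∂ν‖ ≤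
      ((∫⁻ y, ((ENNReal.ofReal ‖y - α‖) ^ 2)⁻¹ ∂μ) ^ (1/2 : ℝ)
          + (∫⁻ y', ((ENNReal.ofReal ‖y' - α‖) ^ 2)⁻¹ ∂ν) ^ (1/2 : ℝ))
        * (∫⁻ z, ENNReal.ofReal (‖z.1 - z.2‖ ^ 2) ∂π) ^ (1/2 : ℝ) := by
  subst hπ1 hπ2
  have hinv : Measurable fun y : H => (ENNReal.ofReal ‖y - α‖)⁻¹ := by fun_prop
  calc ENNReal.ofReal ‖∫ y, unitDir α y ∂π.map Prod.fst - ∫ y', unitDir α y' ∂π.map Prod.snd‖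
      ≤ ∫⁻ z, ENNReal.ofReal ‖unitDir α z.1 - unitDir α z.2‖ ∂π :=
        ofReal_norm_integral_map_fst_sub_integral_map_snd_le π (integrable_unitDir α _)
          (integrable_unitDir α _)
    _ ≤ ∫⁻ z, ((ENNReal.ofReal ‖z.1 - α‖)⁻¹ + (ENNReal.ofReal ‖z.2 - α‖)⁻¹) *
          ENNReal.ofReal ‖z.1 - z.2‖ ∂π :=
        lintegral_mono fun z => ofReal_norm_unitDir_sub_unitDir_le α z.1 z.2
    _ ≤ _ := ENNReal.lintegral_add_mul_le_L2_add_L2_mul_L2 (hinv.comp measurable_fst).aemeasurable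
          (hinv.comp measurable_snd).aemeasurable (by fun_prop)
    _ = _ := by
        simp only [ENNReal.inv_pow, ENNReal.ofReal_pow (norm_nonneg _)]
        rw [lintegral_map (hinv.pow_const 2) measurable_fst,
          lintegral_map (hinv.pow_const 2) measurable_snd]

/-- If `π` is a coupling of two probability measures `μ, ν` on a real Hilbert space and
`α ∈ H` has finite inverse second moments `∫ ‖y − α‖⁻² dμ` and `∫ ‖y − α‖⁻² dν`, then
`‖∫ D(α,y) dμ(y) − ∫ D(α,y') dν(y')‖`
  `≤ (√(∫ ‖y − α‖⁻² dμ) + √(∫ ‖y' − α‖⁻² dν)) · √(∫ ‖y − y'‖² dπ)`. -/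
theorem norm_integral_unitDir_sub_le
    {H : Type*} [NormedAddCommGroup H] [InnerProductSpace ℝ H] [CompleteSpace H]
    [MeasurableSpace H] [BorelSpace H] [SecondCountableTopology H]
    (μ ν : Measure H) [IsProbabilityMeasure μ] [IsProbabilityMeasure ν]
    (π : Measure (H × H)) [IsProbabilityMeasure π]
    (hπ1 : π.map Prod.fst = μ) (hπ2 : π.map Prod.snd = ν)
    (α : H)
    (hμα : ∫⁻ y, ((ENNReal.ofReal ‖y - α‖) ^ 2)⁻¹ ∂μ ≠ ∞)
    (hνα : ∫⁻ y, ((ENNReal.ofReal ‖y - α‖) ^ 2)⁻¹ ∂ν ≠ ∞) :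
    ENNReal.ofReal ‖(∫ y, unitDir α y ∂μ) - ∫ y', unitDir α y' ∂ν‖ ≤
      ((∫⁻ y, ((ENNReal.ofReal ‖y - α‖) ^ 2)⁻¹ ∂μ) ^ (1/2 : ℝ)
          + (∫⁻ y', ((ENNReal.ofReal ‖y' - α‖) ^ 2)⁻¹ ∂ν) ^ (1/2 : ℝ))
        * (∫⁻ z, ENNReal.ofReal (‖z.1 - z.2‖ ^ 2) ∂π) ^ (1/2 : ℝ) :=
  norm_integral_unitDir_sub_le_general μ ν π hπ1 hπ2 α
end

section
/- Suppose: (i) p : ℝ → [0,∞) is bounded by p_max and satisfies |p(x₁) − p(x₂)| ≤ C₂|x₁ − x₂|^β for all x₁, x₂ ∈ ℝ; (ii) for all x₁, x₂ ∈ ℝ there exists a probability measure π on H × H whose marginals are μ_{x₁} and μ_{x₂} and such that ∫ ‖y − y'‖² dπ(y,y') ≤ C₄² |x₁ − x₂|^{2β}; (iii) ∫ ‖y − α‖^{−2} dμ_{x'}(y) ≤ C₆ for every α ∈ H and every x' ∈ ℝ. Then Φ is uniformly Hölder in its first variable: for all x₁, x₂ ∈ ℝ and all α ∈ H, ‖Φ(x₁,α)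 − Φ(x₂,α)‖ ≤ (C₂ + 2 p_max C₄ √C₆) |x₁ − x₂|^β. -/
open MeasureTheory
open scoped Classical ENNReal

/-- The gradient `Φ(x,α) = −p(x) ∫ D(α,y) dμ_x(y)` of the weighted `L¹` criterion. -/
noncomputable def Phi {H : Type*} [NormedAddCommGroup H] [InnerProductSpace ℝ H]
    [MeasurableSpace H] (p : ℝ → ℝ) (μ : ℝ → MeasureTheory.Measure H) (x : ℝ) (α : H) : H :=
  -(p x) • ∫ y, unitDir α y ∂(μ x)

open NormedSpace

section Normalize

variable {V : Type*} [NormedAddCommGroup V] [NormedSpace ℝ V]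

lemma norm_normalize_le_one (x : V) : ‖normalize x‖ ≤ 1 := by
  by_cases hx : x = 0
  · simp [hx, normalize_zero_eq_zero]
  · exact (norm_normalize_eq_one_iff.mpr hx).le

lemma abs_inv_sub_inv_mul_add {r s : ℝ} (hr : 0 ≤ r) (hs : 0 ≤ s) :
    |r⁻¹ - s⁻¹| * (r + s) = |r - s| * (r⁻¹ + s⁻¹) := by
  rcases hr.eq_or_lt with rfl | hr
  · simp [abs_of_nonneg hs, mul_comm]
  rcases hs.eq_or_lt with rfl | hs
  · simp [abs_of_nonneg hr.le, mul_comm]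
  rw [inv_sub_inv hr.ne' hs.ne', abs_div, abs_mul, abs_of_pos hr, abs_of_pos hs, abs_sub_comm]
  field_simp
  ring

lemma norm_normalize_sub_normalize_le (x y : V) :
    ‖normalize x - normalize y‖ ≤ ‖x - y‖ * (‖x‖⁻¹ + ‖y‖⁻¹) := by
  set a := ‖x‖⁻¹
  set b := ‖y‖⁻¹
  have hsplit : (2 : ℝ) • (normalize x - normalize y) =
      (a + b) • (x - y) + (a - b) • (x + y) := by
    simp only [NormedSpace.normalize, a, b]
    module
  have hsym : ‖(a + b) • (x - y)‖ = ‖x - y‖ * (a + b) := by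
    rw [norm_smul, Real.norm_of_nonneg (by positivity), mul_comm]
  have hanti : ‖(a - b) • (x + y)‖ ≤ ‖x - y‖ * (a + b) :=
    calc ‖(a - b) • (x + y)‖ ≤ |a - b| * (‖x‖ + ‖y‖) := by
          rw [norm_smul, Real.norm_eq_abs]
          gcongr
          exact norm_add_le x y
      _ = |‖x‖ - ‖y‖| * (a + b) := abs_inv_sub_inv_mul_add (norm_nonneg x) (norm_nonneg y)
      _ ≤ ‖x - y‖ * (a + b) := by
          gcongr
          exact abs_norm_sub_norm_le x y
  have := norm_add_le ((a + b) • (x - y)) ((a - b) • (x + y))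
  rw [← hsplit, norm_smul, Real.norm_two] at this
  linarith

lemma ofReal_norm_normalize_sub_normalize_le (x y : V) :
    ENNReal.ofReal ‖normalize x - normalize y‖ ≤
      ENNReal.ofReal ‖x - y‖ * ((ENNReal.ofReal ‖x‖)⁻¹ + (ENNReal.ofReal ‖y‖)⁻¹) :=
  calc ENNReal.ofReal ‖normalize x - normalize y‖
      ≤ ENNReal.ofReal (‖x - y‖ * (‖x‖⁻¹ + ‖y‖⁻¹)) :=
        ENNReal.ofReal_le_ofReal (norm_normalize_sub_normalize_le x y)
    _ = ENNReal.ofReal ‖x - y‖ * (ENNReal.ofReal ‖x‖⁻¹ + ENNReal.ofReal ‖y‖⁻¹) := by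
        rw [ENNReal.ofReal_mul (norm_nonneg _), ENNReal.ofReal_add (by positivity) (by positivity)]
    _ ≤ _ := by gcongr <;> exact ENNReal.ofReal_inv_le

end Normalize

lemma unitDir_eq_normalize {H : Type*} [NormedAddCommGroup H] [InnerProductSpace ℝ H] (a : H) :
    unitDir a = fun b => normalize (b - a) := by
  ext b
  by_cases h : b = a
  · simp [unitDir, h, normalize_zero_eq_zero]
  · simp [unitDir, h, NormedSpace.normalize]

lemma ENNReal.lintegral_mul_le_of_lintegral_sq_le {X : Type*} [MeasurableSpace X] {μ : Measure X}
    {f g : X → ℝ≥0∞} (hf : AEMeasurable f μ) (hg : AEMeasurable g μ) {a b : ℝ≥0∞}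
    (hfa : ∫⁻ x, f x ^ 2 ∂μ ≤ a ^ 2) (hgb : ∫⁻ x, g x ^ 2 ∂μ ≤ b ^ 2) :
    ∫⁻ x, f x * g x ∂μ ≤ a * b := by
  have hsqrt {c d : ℝ≥0∞} (h : c ≤ d ^ 2) : c ^ (1 / 2 : ℝ) ≤ d := by
    calc c ^ (1 / 2 : ℝ) ≤ (d ^ 2) ^ (1 / 2 : ℝ) := ENNReal.rpow_le_rpow h (by norm_num)
      _ = d := by simpa using ENNReal.pow_rpow_inv_natCast two_ne_zero d
  calc ∫⁻ x, f x * g x ∂μ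
      ≤ (∫⁻ x, f x ^ (2 : ℝ) ∂μ) ^ (1 / 2 : ℝ) * (∫⁻ x, g x ^ (2 : ℝ) ∂μ) ^ (1 / 2 : ℝ) :=
        ENNReal.lintegral_mul_le_Lp_mul_Lq μ .two_two hf hg
    _ ≤ a * b := by
        simp only [ENNReal.rpow_two]
        gcongr
        exacts [hsqrt hfa, hsqrt hgb]

lemma norm_integral_map_fst_sub_integral_map_snd_le {X E : Type*} [MeasurableSpace X]
    [NormedAddCommGroup E] [NormedSpace ℝ E] {π : Measure (X × X)} {f : X → E}
    (hf₁ : Integrable f (π.map Prod.fst)) (hf₂ : Integrable f (π.map Prod.snd)) :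
    ‖∫ x, f x ∂(π.map Prod.fst) - ∫ x, f x ∂(π.map Prod.snd)‖ ≤ ∫ z, ‖f z.1 - f z.2‖ ∂π := by
  rw [integral_map measurable_fst.aemeasurable hf₁.aestronglyMeasurable,
    integral_map measurable_snd.aemeasurable hf₂.aestronglyMeasurable,
    ← integral_sub (f := fun z : X × X => f z.1) (g := fun z : X × X => f z.2)
      (hf₁.comp_measurable measurable_fst) (hf₂.comp_measurable measurable_snd)]
  exact norm_integral_le_integral_norm _

section Coupling

variable {H : Type*} [NormedAddCommGroup H] [NormedSpace ℝ H] [MeasurableSpace H] [BorelSpace H]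
  [SecondCountableTopology H]

@[fun_prop]
lemma measurable_normalize : Measurable (normalize : H → H) := by
  unfold NormedSpace.normalize
  fun_prop

lemma lintegral_norm_normalize_sub_le_of_coupling (π : Measure (H × H)) (α : H) {a b : ℝ≥0∞}
    (hcost : ∫⁻ z, ENNReal.ofReal (‖z.1 - z.2‖ ^ 2) ∂π ≤ a ^ 2)
    (hmom₁ : ∫⁻ y, (ENNReal.ofReal ‖y - α‖ ^ 2)⁻¹ ∂(π.map Prod.fst) ≤ b ^ 2)
    (hmom₂ : ∫⁻ y, (ENNReal.ofReal ‖y - α‖ ^ 2)⁻¹ ∂(π.map Prod.snd) ≤ b ^ 2) :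
    ∫⁻ z, ENNReal.ofReal ‖normalize (z.1 - α) - normalize (z.2 - α)‖ ∂π ≤ 2 * a * b := by
  set A : H × H → ℝ≥0∞ := fun z => ENNReal.ofReal ‖z.1 - z.2‖
  have hA : AEMeasurable A π := by fun_prop
  have hA_sq : ∫⁻ z, A z ^ 2 ∂π ≤ a ^ 2 := by
    simpa only [A, ← ENNReal.ofReal_pow (norm_nonneg _)] using hcost
  have hcross (φ : H × H → H) (hφ : Measurable φ)
      (hmom : ∫⁻ y, (ENNReal.ofReal ‖y - α‖ ^ 2)⁻¹ ∂(π.map φ) ≤ b ^ 2) :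
      ∫⁻ z, A z * (ENNReal.ofReal ‖φ z - α‖)⁻¹ ∂π ≤ a * b := by
    refine ENNReal.lintegral_mul_le_of_lintegral_sq_le hA (by fun_prop) hA_sq ?_
    rw [lintegral_map (by fun_prop) hφ] at hmom
    simpa only [ENNReal.inv_pow] using hmom
  calc ∫⁻ z, ENNReal.ofReal ‖normalize (z.1 - α) - normalize (z.2 - α)‖ ∂π
      ≤ ∫⁻ z, A z * (ENNReal.ofReal ‖z.1 - α‖)⁻¹ + A z * (ENNReal.ofReal ‖z.2 - α‖)⁻¹ ∂π := by
        refine lintegral_mono fun z => ?_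
        rw [← mul_add]
        simpa only [A, sub_sub_sub_cancel_right] using
          ofReal_norm_normalize_sub_normalize_le (z.1 - α) (z.2 - α)
    _ = ∫⁻ z, A z * (ENNReal.ofReal ‖z.1 - α‖)⁻¹ ∂π
          + ∫⁻ z, A z * (ENNReal.ofReal ‖z.2 - α‖)⁻¹ ∂π :=
        lintegral_add_left' (by fun_prop) _
    _ ≤ a * b + a * b :=
        add_le_add (hcross _ measurable_fst hmom₁) (hcross _ measurable_snd hmom₂)
    _ = 2 * a * b := by ring

lemma norm_integral_normalize_sub_le_of_coupling (π : Measure (H × H)) [IsProbabilityMeasure π]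
    (α : H) {a b : ℝ} (ha : 0 ≤ a) (hb : 0 ≤ b)
    (hcost : ∫⁻ z, ENNReal.ofReal (‖z.1 - z.2‖ ^ 2) ∂π ≤ ENNReal.ofReal a ^ 2)
    (hmom₁ : ∫⁻ y, (ENNReal.ofReal ‖y - α‖ ^ 2)⁻¹ ∂(π.map Prod.fst) ≤ ENNReal.ofReal b ^ 2)
    (hmom₂ : ∫⁻ y, (ENNReal.ofReal ‖y - α‖ ^ 2)⁻¹ ∂(π.map Prod.snd) ≤ ENNReal.ofReal b ^ 2) :
    ‖∫ y, normalize (y - α) ∂(π.map Prod.fst) - ∫ y, normalize (y - α) ∂(π.map Prod.snd)‖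
      ≤ 2 * a * b := by
  have hint (φ : H × H → H) : Integrable (fun y => normalize (y - α)) (π.map φ) :=
    .of_bound (by fun_prop : Measurable _).aestronglyMeasurable 1
      (.of_forall fun y => norm_normalize_le_one _)
  calc _ ≤ ∫ z, ‖normalize (z.1 - α) - normalize (z.2 - α)‖ ∂π :=
        norm_integral_map_fst_sub_integral_map_snd_le (hint _) (hint _)
    _ = (∫⁻ z, ENNReal.ofReal ‖normalize (z.1 - α) - normalize (z.2 - α)‖ ∂π).toReal :=
        integral_eq_lintegral_of_nonneg_ae (.of_forall fun _ => norm_nonneg _) (by fun_prop)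
    _ ≤ 2 * a * b := by
        refine ENNReal.toReal_le_of_le_ofReal (by positivity) ?_
        rw [ENNReal.ofReal_mul (by positivity), ENNReal.ofReal_mul zero_le_two, ENNReal.ofReal_ofNat]
        exact lintegral_norm_normalize_sub_le_of_coupling π α hcost hmom₁ hmom₂

end Coupling

lemma norm_Phi_sub_Phi_le {H : Type*} [NormedAddCommGroup H] [InnerProductSpace ℝ H]
    [MeasurableSpace H] (p : ℝ → ℝ) (μ : ℝ → Measure H) (x₁ x₂ : ℝ) (α : H) :
    ‖Phi p μ x₁ α - Phi p μ x₂ α‖ ≤ |p x₁ - p x₂| * ‖∫ y, unitDir α y ∂(μ x₁)‖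
      + |p x₂| * ‖∫ y, unitDir α y ∂(μ x₁) - ∫ y, unitDir α y ∂(μ x₂)‖ := by
  have hsplit : Phi p μ x₁ α - Phi p μ x₂ α = -((p x₁ - p x₂) • ∫ y, unitDir α y ∂(μ x₁))
      - p x₂ • (∫ y, unitDir α y ∂(μ x₁) - ∫ y, unitDir α y ∂(μ x₂)) := by
    simp only [Phi]
    module
  rw [hsplit]
  refine (norm_sub_le _ _).trans_eq ?_
  rw [norm_neg, norm_smul, norm_smul, Real.norm_eq_abs, Real.norm_eq_abs]

theorem phi_uniform_holder_general
    {H : Type*} [NormedAddCommGroup H] [InnerProductSpace ℝ H]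
    [MeasurableSpace H] [BorelSpace H] [SecondCountableTopology H]
    (μ : ℝ → Measure H) [∀ x', IsProbabilityMeasure (μ x')]
    (p : ℝ → ℝ) (hp_nonneg : ∀ x', 0 ≤ p x')
    (C₂ C₄ C₆ pmax β : ℝ)
    (hC₄ : 0 < C₄)
    -- (i) p is bounded by pmax and β-Hölder with constant C₂
    (hp_bdd : ∀ x', p x' ≤ pmax)
    (hp_holder : ∀ x₁ x₂ : ℝ, |p x₁ - p x₂| ≤ C₂ * |x₁ - x₂| ^ β)
    -- (ii) couplings with second moment cost at most C₄² |x₁ − x₂|^{2β}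
    (hcoupling : ∀ x₁ x₂ : ℝ, ∃ π : Measure (H × H), IsProbabilityMeasure π ∧
      π.map Prod.fst = μ x₁ ∧ π.map Prod.snd = μ x₂ ∧
      ∫⁻ z, ENNReal.ofReal (‖z.1 - z.2‖ ^ 2) ∂π ≤
        ENNReal.ofReal (C₄ ^ 2 * |x₁ - x₂| ^ (2 * β)))
    -- (iii) uniformly bounded inverse second moments
    (hmom : ∀ (α : H) (x' : ℝ),
      ∫⁻ y, ((ENNReal.ofReal ‖y - α‖) ^ 2)⁻¹ ∂(μ x') ≤ ENNReal.ofReal C₆) :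
    ∀ (x₁ x₂ : ℝ) (α : H),
      ‖Phi p μ x₁ α - Phi p μ x₂ α‖ ≤
        (C₂ + 2 * pmax * C₄ * Real.sqrt C₆) * |x₁ - x₂| ^ β := by
  intro x₁ x₂ α
  obtain ⟨π, hπ, hfst, hsnd, hcost⟩ := hcoupling x₁ x₂
  set d := |x₁ - x₂| ^ β
  have hmom_sqrt (x' : ℝ) : ∫⁻ y, ((ENNReal.ofReal ‖y - α‖) ^ 2)⁻¹ ∂(μ x') ≤
      ENNReal.ofReal √C₆ ^ 2 := by
    rw [← ENNReal.ofReal_pow (Real.sqrt_nonneg _), Real.sq_sqrt']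
    exact (hmom α x').trans (ENNReal.ofReal_le_ofReal (le_max_left _ _))
  have hcost' : ∫⁻ z, ENNReal.ofReal (‖z.1 - z.2‖ ^ 2) ∂π ≤ ENNReal.ofReal (C₄ * d) ^ 2 := by
    rwa [← ENNReal.ofReal_pow (by positivity), mul_pow, ← Real.rpow_mul_natCast (abs_nonneg _),
      Nat.cast_ofNat, mul_comm β]
  have hI : ‖∫ y, unitDir α y ∂(μ x₁)‖ ≤ 1 := by
    rw [unitDir_eq_normalize]
    simpa using norm_integral_le_of_norm_le_const (μ := μ x₁)
      (.of_forall fun y => norm_normalize_le_one (y - α))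
  have hdiff : ‖∫ y, unitDir α y ∂(μ x₁) - ∫ y, unitDir α y ∂(μ x₂)‖ ≤ 2 * (C₄ * d) * √C₆ := by
    rw [unitDir_eq_normalize, ← hfst, ← hsnd]
    exact norm_integral_normalize_sub_le_of_coupling π α (by positivity) (Real.sqrt_nonneg _)
      hcost' (hfst ▸ hmom_sqrt x₁) (hsnd ▸ hmom_sqrt x₂)
  calc ‖Phi p μ x₁ α - Phi p μ x₂ α‖
      ≤ |p x₁ - p x₂| * ‖∫ y, unitDir α y ∂(μ x₁)‖
        + |p x₂| * ‖∫ y, unitDir α y ∂(μ x₁) - ∫ y, unitDir α y ∂(μ x₂)‖ :=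
        norm_Phi_sub_Phi_le p μ x₁ x₂ α
    _ ≤ C₂ * d * 1 + pmax * (2 * (C₄ * d) * √C₆) := by
        gcongr
        · exact (abs_nonneg _).trans (hp_holder x₁ x₂)
        · exact hp_holder x₁ x₂
        · exact (hp_nonneg x₂).trans (hp_bdd x₂)
        · exact (abs_of_nonneg (hp_nonneg x₂)).trans_le (hp_bdd x₂)
    _ = (C₂ + 2 * pmax * C₄ * √C₆) * d := by ring

/-- If the density `p` is bounded and `β`-Hölder, the conditional laws `μ_x` are
`β`-Hölder in the Wasserstein sense (witnessed by couplings), and the inverse second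
moments are uniformly bounded by `C₆`, then `Φ` is uniformly Hölder in its first
variable with constant `C₂ + 2 p_max C₄ √C₆`. -/
theorem phi_uniform_holder
    {H : Type*} [NormedAddCommGroup H] [InnerProductSpace ℝ H] [CompleteSpace H]
    [MeasurableSpace H] [BorelSpace H] [SecondCountableTopology H]
    (μ : ℝ → Measure H) [∀ x', IsProbabilityMeasure (μ x')]
    (p : ℝ → ℝ) (hp_meas : Measurable p) (hp_nonneg : ∀ x', 0 ≤ p x')
    (C₂ C₄ C₆ pmax β : ℝ)
    (hC₂ : 0 < C₂) (hC₄ : 0 < C₄) (hC₆ : 0 < C₆) (hpmax : 0 < pmax) (hβ : 0 < β)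
    -- (i) p is bounded by pmax and β-Hölder with constant C₂
    (hp_bdd : ∀ x', p x' ≤ pmax)
    (hp_holder : ∀ x₁ x₂ : ℝ, |p x₁ - p x₂| ≤ C₂ * |x₁ - x₂| ^ β)
    -- (ii) couplings with second moment cost at most C₄² |x₁ − x₂|^{2β}
    (hcoupling : ∀ x₁ x₂ : ℝ, ∃ π : Measure (H × H), IsProbabilityMeasure π ∧
      π.map Prod.fst = μ x₁ ∧ π.map Prod.snd = μ x₂ ∧
      ∫⁻ z, ENNReal.ofReal (‖z.1 - z.2‖ ^ 2) ∂π ≤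
        ENNReal.ofReal (C₄ ^ 2 * |x₁ - x₂| ^ (2 * β)))
    -- (iii) uniformly bounded inverse second moments
    (hmom : ∀ (α : H) (x' : ℝ),
      ∫⁻ y, ((ENNReal.ofReal ‖y - α‖) ^ 2)⁻¹ ∂(μ x') ≤ ENNReal.ofReal C₆) :
    ∀ (x₁ x₂ : ℝ) (α : H),
      ‖Phi p μ x₁ α - Phi p μ x₂ α‖ ≤
        (C₂ + 2 * pmax * C₄ * Real.sqrt C₆) * |x₁ - x₂| ^ β :=
  phi_uniform_holder_general μ p hp_nonneg C₂ C₄ C₆ pmax β hC₄ hp_bdd hp_holder hcoupling hmom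
end

section
/- Let H be a real Hilbert space and let Γ be a continuous linear self-adjoint operator on H such that c_min ‖u‖² ≤ ⟨Γu, u⟩ ≤ c_max ‖u‖² for all u ∈ H, where 0 < c_min ≤ c_max. Let (γ_k)_{k≥1} be positive reals with γ_k c_max ≤ 1 for all k. Then for every n ≥ 1, the operator norm of the product β_n := (I − γ_n Γ)(I − γ_{n−1} Γ) ⋯ (I − γ_1 Γ) satisfies ‖β_n‖ ≤ ∏_{k=1}^n (1 − γ_k c_min) ≤ exp(−c_min ∑_{k=1}^n γ_k). -/
/-!
Each factor `I - γ_k Γ` is self-adjoint with numerical range in `[1 - γ_k c_max, 1 - γ_k c_min]`,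
a subinterval of `[0, 1 - γ_k c_min]`; for a self-adjoint operator the norm is the supremum of
`|⟨Tu, u⟩| / ‖u‖²`, so `‖I - γ_k Γ‖ ≤ 1 - γ_k c_min`. Submultiplicativity gives the product bound,
and `1 - x ≤ exp (-x)` gives the exponential one.
-/

open scoped RealInnerProductSpace

namespace ContinuousLinearMap

variable {H : Type*} [NormedAddCommGroup H] [InnerProductSpace ℝ H]

theorem opNorm_le_of_abs_inner_le {T : H →L[ℝ] H} (hT : (T : H →ₗ[ℝ] H).IsSymmetric) {m : ℝ}
    (hm : 0 ≤ m) (h : ∀ u, |⟪T u, u⟫| ≤ m * ‖u‖ ^ 2) : ‖T‖ ≤ m := by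
  rw [T.norm_eq_iSup_rayleighQuotient hT]
  refine ciSup_le fun u ↦ ?_
  rw [rayleighQuotient, reApplyInnerSelf_apply, RCLike.re_to_real, abs_div, abs_sq]
  exact div_le_of_le_mul₀ (sq_nonneg _) hm (h u)

theorem norm_one_sub_smul_le {Γ : H →L[ℝ] H} (hΓ : (Γ : H →ₗ[ℝ] H).IsSymmetric)
    {cmin cmax t : ℝ} (hcc : cmin ≤ cmax) (ht : 0 ≤ t) (htc : t * cmax ≤ 1)
    (hbelow : ∀ u, cmin * ‖u‖ ^ 2 ≤ ⟪Γ u, u⟫) (habove : ∀ u, ⟪Γ u, u⟫ ≤ cmax * ‖u‖ ^ 2) :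
    ‖1 - t • Γ‖ ≤ 1 - t * cmin := by
  have hfactor : 0 ≤ 1 - t * cmin := by nlinarith
  refine opNorm_le_of_abs_inner_le ?_ hfactor fun u ↦ ?_
  · intro u v
    simp only [coe_coe, sub_apply, smul_apply, one_apply_eq_self, inner_sub_left,
      inner_sub_right, real_inner_smul_left, real_inner_smul_right]
    exact congrArg (⟪u, v⟫ - t * ·) (hΓ u v)
  · have hinner : ⟪(1 - t • Γ) u, u⟫ = ‖u‖ ^ 2 - t * ⟪Γ u, u⟫ := by
      rw [sub_apply, one_apply_eq_self, smul_apply, inner_sub_left, real_inner_smul_left,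
        real_inner_self_eq_norm_sq]
    rw [hinner, abs_le]
    constructor
    · nlinarith [mul_le_mul_of_nonneg_left (habove u) ht, sq_nonneg ‖u‖]
    · nlinarith [mul_le_mul_of_nonneg_left (hbelow u) ht]

end ContinuousLinearMap

theorem norm_le_prod_Icc_of_succ_eq_mul {R : Type*} [SeminormedRing R] {A B : ℕ → R}
    {c : ℕ → ℝ} (hB0 : ‖B 0‖ ≤ 1) (hBrec : ∀ n, B (n + 1) = A (n + 1) * B n)
    (hA : ∀ n, ‖A (n + 1)‖ ≤ c (n + 1)) (n : ℕ) : ‖B n‖ ≤ ∏ k ∈ Finset.Icc 1 n, c k := by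
  induction n with
  | zero => simpa using hB0
  | succ n ih =>
    rw [hBrec, Finset.prod_Icc_succ_top (Nat.le_add_left 1 n), mul_comm]
    calc ‖A (n + 1) * B n‖ ≤ ‖A (n + 1)‖ * ‖B n‖ := norm_mul_le _ _
      _ ≤ c (n + 1) * ∏ k ∈ Finset.Icc 1 n, c k :=
        mul_le_mul (hA n) ih (norm_nonneg _) ((norm_nonneg _).trans (hA n))

theorem Real.prod_one_sub_le_exp_neg_sum {ι : Type*} (s : Finset ι) {x : ι → ℝ}
    (hx : ∀ i ∈ s, x i ≤ 1) : ∏ i ∈ s, (1 - x i) ≤ Real.exp (-∑ i ∈ s, x i) := by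
  rw [← Finset.sum_neg_distrib, Real.exp_sum]
  exact Finset.prod_le_prod (fun i hi ↦ sub_nonneg.mpr (hx i hi))
    fun i _ ↦ Real.one_sub_le_exp_neg (x i)

theorem opNorm_prod_one_sub_smul_le_general
    {H : Type*} [NormedAddCommGroup H] [InnerProductSpace ℝ H]
    (Γ : H →L[ℝ] H) (hΓ_sa : ∀ u v : H, ⟪Γ u, v⟫ = ⟪u, Γ v⟫)
    (cmin cmax : ℝ) (hcc : cmin ≤ cmax)
    (hΓ_below : ∀ u : H, cmin * ‖u‖ ^ 2 ≤ ⟪Γ u, u⟫)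
    (hΓ_above : ∀ u : H, ⟪Γ u, u⟫ ≤ cmax * ‖u‖ ^ 2)
    (γ : ℕ → ℝ) (hγ_pos : ∀ k, 1 ≤ k → 0 < γ k) (hγ_le : ∀ k, 1 ≤ k → γ k * cmax ≤ 1)
    (B : ℕ → H →L[ℝ] H) (hB0 : B 0 = 1)
    (hBrec : ∀ n, B (n + 1) = (1 - γ (n + 1) • Γ).comp (B n)) :
    ∀ n, 1 ≤ n →
      ‖B n‖ ≤ ∏ k ∈ Finset.Icc 1 n, (1 - γ k * cmin) ∧
      ∏ k ∈ Finset.Icc 1 n, (1 - γ k * cmin) ≤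
        Real.exp (-(cmin * ∑ k ∈ Finset.Icc 1 n, γ k)) := by
  have hstep (k : ℕ) (hk : 1 ≤ k) : ‖1 - γ k • Γ‖ ≤ 1 - γ k * cmin :=
    ContinuousLinearMap.norm_one_sub_smul_le hΓ_sa hcc (hγ_pos k hk).le
      (hγ_le k hk) hΓ_below hΓ_above
  intro n _
  constructor
  · exact norm_le_prod_Icc_of_succ_eq_mul (A := fun k ↦ 1 - γ k • Γ)
      (hB0 ▸ ContinuousLinearMap.norm_id_le) hBrec (fun k ↦ hstep (k + 1) (Nat.le_add_left 1 k)) n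
  · rw [Finset.mul_sum]
    simp_rw [mul_comm cmin]
    refine Real.prod_one_sub_le_exp_neg_sum _ fun k hk ↦ ?_
    have hk := (Finset.mem_Icc.mp hk).1
    exact (mul_le_mul_of_nonneg_left hcc (hγ_pos k hk).le).trans (hγ_le k hk)

/-- If `Γ` is a continuous self-adjoint operator on a real Hilbert space with
`c_min ‖u‖² ≤ ⟨Γu, u⟩ ≤ c_max ‖u‖²` and the steps satisfy `γ_k c_max ≤ 1`, then the
products `β_n = (I − γ_n Γ) ⋯ (I − γ_1 Γ)` satisfy
`‖β_n‖ ≤ ∏_{k=1}^n (1 − γ_k c_min) ≤ exp(−c_min ∑_{k=1}^n γ_k)`. -/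
theorem opNorm_prod_one_sub_smul_le
    {H : Type*} [NormedAddCommGroup H] [InnerProductSpace ℝ H] [CompleteSpace H]
    (Γ : H →L[ℝ] H) (hΓ_sa : ∀ u v : H, ⟪Γ u, v⟫ = ⟪u, Γ v⟫)
    (cmin cmax : ℝ) (hcmin : 0 < cmin) (hcc : cmin ≤ cmax)
    (hΓ_below : ∀ u : H, cmin * ‖u‖ ^ 2 ≤ ⟪Γ u, u⟫)
    (hΓ_above : ∀ u : H, ⟪Γ u, u⟫ ≤ cmax * ‖u‖ ^ 2)
    (γ : ℕ → ℝ) (hγ_pos : ∀ k, 1 ≤ k → 0 < γ k) (hγ_le : ∀ k, 1 ≤ k → γ k * cmax ≤ 1)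
    (B : ℕ → H →L[ℝ] H) (hB0 : B 0 = 1)
    (hBrec : ∀ n, B (n + 1) = (1 - γ (n + 1) • Γ).comp (B n)) :
    ∀ n, 1 ≤ n →
      ‖B n‖ ≤ ∏ k ∈ Finset.Icc 1 n, (1 - γ k * cmin) ∧
      ∏ k ∈ Finset.Icc 1 n, (1 - γ k * cmin) ≤
        Real.exp (-(cmin * ∑ k ∈ Finset.Icc 1 n, γ k)) :=
  opNorm_prod_one_sub_smul_le_general Γ hΓ_sa cmin cmax hcc hΓ_below hΓ_above γ hγ_pos hγ_le B hB0
    hBrec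
end

section
/- Let H be a real Hilbert space. For w ∈ H let T_w denote the continuous linear operator on H defined by T_w(u) = ⟨w, u⟩ w. Then for any three points a, b, c ∈ H with b ≠ a and c ≠ a, the rank-one operators built from the unit vectors D(a,b) and D(a,c) satisfy the operator-norm bound ‖T_{D(a,b)} − T_{D(a,c)}‖ ≤ 2 (1/‖a − b‖ + 1/‖a − c‖) ‖b − c‖. -/
open scoped Classical RealInnerProductSpace

/-- The rank-one operator `T_w : u ↦ ⟨w, u⟩ w`. -/
noncomputable def rankOne {H : Type*} [NormedAddCommGroup H] [InnerProductSpace ℝ H]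
    (w : H) : H →L[ℝ] H :=
  (innerSL ℝ w).smulRight w

/-!
Writing `T_w - T_v = ⟨w, ·⟩ (w - v) + ⟨w - v, ·⟩ v` gives `‖T_w - T_v‖ ≤ (‖w‖ + ‖v‖) ‖w - v‖`,
which is `2 ‖w - v‖` for unit vectors. The unit vectors `x / ‖x‖` and `y / ‖y‖` differ by at most
`2 ‖x - y‖ / ‖y‖`, because `‖y‖ (x / ‖x‖ - y / ‖y‖) = (x - y) + (‖y‖ - ‖x‖) x / ‖x‖`; averaging
this with the same bound with `x` and `y` exchanged gives `(‖x‖⁻¹ + ‖y‖⁻¹) ‖x - y‖`.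
-/

namespace NormedSpace

variable {V : Type*} [NormedAddCommGroup V] [NormedSpace ℝ V]

lemma norm_normalize_le (x : V) : ‖normalize x‖ ≤ 1 := by
  by_cases hx : x = 0
  · simp [hx]
  · exact (norm_normalize hx).le

lemma norm_mul_norm_normalize_sub_normalize_le (x y : V) :
    ‖y‖ * ‖normalize x - normalize y‖ ≤ 2 * ‖x - y‖ := by
  have hdecomp : ‖y‖ • (normalize x - normalize y) = (x - y) + (‖y‖ - ‖x‖) • normalize x := by
    rw [smul_sub, sub_smul, norm_smul_normalize, norm_smul_normalize]
    abel
  have hnorms : |‖y‖ - ‖x‖| ≤ ‖x - y‖ := by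
    rw [abs_sub_comm]
    exact abs_norm_sub_norm_le x y
  calc ‖y‖ * ‖normalize x - normalize y‖
      = ‖(x - y) + (‖y‖ - ‖x‖) • normalize x‖ := by
        rw [← hdecomp, norm_smul, Real.norm_of_nonneg (norm_nonneg y)]
    _ ≤ ‖x - y‖ + |‖y‖ - ‖x‖| * ‖normalize x‖ := by
        rw [← Real.norm_eq_abs, ← norm_smul]
        exact norm_add_le _ _
    _ ≤ ‖x - y‖ + ‖x - y‖ * 1 := by
        gcongr
        exact norm_normalize_le x
    _ = 2 * ‖x - y‖ := by ring

lemma norm_normalize_sub_normalize_le {x y : V} (hx : x ≠ 0) (hy : y ≠ 0) :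
    ‖normalize x - normalize y‖ ≤ (‖x‖⁻¹ + ‖y‖⁻¹) * ‖x - y‖ := by
  have hx' : 0 < ‖x‖ := norm_pos_iff.mpr hx
  have hy' : 0 < ‖y‖ := norm_pos_iff.mpr hy
  have hleft := norm_mul_norm_normalize_sub_normalize_le x y
  have hright := norm_mul_norm_normalize_sub_normalize_le y x
  rw [norm_sub_rev (normalize y), norm_sub_rev y] at hright
  rw [← le_div_iff₀' hy'] at hleft
  rw [← le_div_iff₀' hx'] at hright
  calc ‖normalize x - normalize y‖
      ≤ (2 * ‖x - y‖ / ‖x‖ + 2 * ‖x - y‖ / ‖y‖) / 2 := by linarith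
    _ = (‖x‖⁻¹ + ‖y‖⁻¹) * ‖x - y‖ := by ring

end NormedSpace

section RankOne

variable {H : Type*} [NormedAddCommGroup H] [InnerProductSpace ℝ H]

lemma rankOne_sub_rankOne (w v : H) :
    rankOne w - rankOne v = (innerSL ℝ w).smulRight (w - v) + (innerSL ℝ (w - v)).smulRight v := by
  ext u
  simp [rankOne, sub_smul, smul_sub]

lemma norm_rankOne_sub_rankOne_le (w v : H) :
    ‖rankOne w - rankOne v‖ ≤ (‖w‖ + ‖v‖) * ‖w - v‖ := by
  rw [rankOne_sub_rankOne]
  calc _ ≤ ‖(innerSL ℝ w).smulRight (w - v)‖ + ‖(innerSL ℝ (w - v)).smulRight v‖ := norm_add_le _ _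
    _ = (‖w‖ + ‖v‖) * ‖w - v‖ := by
        rw [ContinuousLinearMap.norm_smulRight_apply, ContinuousLinearMap.norm_smulRight_apply,
          innerSL_apply_norm, innerSL_apply_norm]
        ring

lemma unitDir_eq_normalize_s14 (a b : H) : unitDir a b = NormedSpace.normalize (b - a) := by
  by_cases h : b = a
  · simp [unitDir, h]
  · simp [unitDir, h, NormedSpace.normalize]

end RankOne

theorem rankOne_unitDir_sub_le_general
    {H : Type*} [NormedAddCommGroup H] [InnerProductSpace ℝ H]
    (a b c : H) (hb : b ≠ a) (hc : c ≠ a) :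
    ‖rankOne (unitDir a b) - rankOne (unitDir a c)‖ ≤
      2 * (1 / ‖a - b‖ + 1 / ‖a - c‖) * ‖b - c‖ := by
  rw [unitDir_eq_normalize_s14, unitDir_eq_normalize_s14]
  set u := NormedSpace.normalize (b - a)
  set v := NormedSpace.normalize (c - a)
  calc ‖rankOne u - rankOne v‖
      ≤ (‖u‖ + ‖v‖) * ‖u - v‖ := norm_rankOne_sub_rankOne_le u v
    _ ≤ 2 * ‖u - v‖ := by
        gcongr
        linarith [NormedSpace.norm_normalize_le (b - a), NormedSpace.norm_normalize_le (c - a)]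
    _ ≤ 2 * ((‖b - a‖⁻¹ + ‖c - a‖⁻¹) * ‖(b - a) - (c - a)‖) := by
        gcongr
        exact NormedSpace.norm_normalize_sub_normalize_le (sub_ne_zero.mpr hb) (sub_ne_zero.mpr hc)
    _ = 2 * (1 / ‖a - b‖ + 1 / ‖a - c‖) * ‖b - c‖ := by
        rw [norm_sub_rev a b, norm_sub_rev a c, sub_sub_sub_cancel_right]
        ring

/-- For `b ≠ a` and `c ≠ a`, the rank-one operators built from the unit vectors
`D(a,b)` and `D(a,c)` satisfy
`‖T_{D(a,b)} − T_{D(a,c)}‖ ≤ 2 (1/‖a − b‖ + 1/‖a − c‖) ‖b − c‖` in operator norm. -/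
theorem rankOne_unitDir_sub_le
    {H : Type*} [NormedAddCommGroup H] [InnerProductSpace ℝ H] [CompleteSpace H]
    (a b c : H) (hb : b ≠ a) (hc : c ≠ a) :
    ‖rankOne (unitDir a b) - rankOne (unitDir a c)‖ ≤
      2 * (1 / ‖a - b‖ + 1 / ‖a - c‖) * ‖b - c‖ :=
  rankOne_unitDir_sub_le_general a b c hb hc
end
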